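/- arXiv:2506.07700 — 4 statements merged into one kernel-verified Lean document; each statement's English description precedes it below -/
import Mathlib

section
/- For every real c with 0 < c < 1 and every real γ > 0, there exists d₀ ∈ ℕ such that the following holds: if G is a d-regular simple graph (on any finite vertex set) with d ≥ d₀, then there exists a subset A of the vertices of G such that for every vertex v of G, c·d − γ·d ≤ |N_G(v) ∩ A| ≤ c·d + γ·d, where N_G(v) denotes the neighbourhood of v in G. -/
open MeasureTheory ProbabilityTheory Filter Topology Real Finset unitInterval SimpleGraph

/-!
Put each vertex into `A` independently with probability `c`. By Hoeffding's inequality,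
`|N(v) ∩ A|` deviates from `c d` by more than `γ d` with probability at most `2 exp (-2 γ² d)`.
This bad event depends only on the coins in `N(v)`, so it is mutually independent of the bad
events at all vertices sharing no neighbour with `v`, i.e. of all but at most `d²` of them.
As `8 exp (-2 γ² d) (d² + 1) → 0`, the symmetric Lovász Local Lemma applies for large `d`.
-/

namespace ProbabilityTheory

lemma IndepSet.measureReal_inter_eq_mul {Ω : Type*} [MeasurableSpace Ω] {μ : Measure Ω}
    {s t : Set Ω} (h : IndepSet s t μ) : μ.real (s ∩ t) = μ.real s * μ.real t := by
  simp only [measureReal_def, h.measure_inter_eq_mul, ENNReal.toReal_mul]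

section LocalLemma

variable {Ω ι : Type*} [MeasurableSpace Ω] {μ : Measure Ω} [IsProbabilityMeasure μ]
  {E : ι → Set Ω} {Γ : ι → Finset ι} {p : ℝ}

lemma measureReal_biInter_compl_le_two_mul [DecidableEq ι] {S T : Finset ι}
    (hbound : ∀ j ∈ S \ T,
      μ.real (E j ∩ ⋂ k ∈ T, (E k)ᶜ) ≤ 2 * p * μ.real (⋂ k ∈ T, (E k)ᶜ))
    (hcard : 4 * p * #(S \ T) ≤ 1) :
    μ.real (⋂ j ∈ T, (E j)ᶜ) ≤ 2 * μ.real (⋂ j ∈ S, (E j)ᶜ) := by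
  have hcover : ⋂ j ∈ T, (E j)ᶜ ⊆ (⋂ j ∈ S, (E j)ᶜ) ∪ ⋃ j ∈ S \ T, E j ∩ ⋂ k ∈ T, (E k)ᶜ := by
    intro ω hω
    by_cases h : ∃ j ∈ S, ω ∈ E j
    · obtain ⟨j, hjS, hj⟩ := h
      have hjT : j ∉ T := fun hjT => Set.mem_iInter₂.1 hω j hjT hj
      exact Or.inr (Set.mem_biUnion (mem_sdiff.2 ⟨hjS, hjT⟩) ⟨hj, hω⟩)
    · push Not at h
      exact Or.inl (Set.mem_iInter₂.2 h)
  have := calc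
    μ.real (⋂ j ∈ T, (E j)ᶜ)
      ≤ μ.real (⋂ j ∈ S, (E j)ᶜ) + μ.real (⋃ j ∈ S \ T, E j ∩ ⋂ k ∈ T, (E k)ᶜ) :=
        (measureReal_mono hcover).trans (measureReal_union_le _ _)
    _ ≤ μ.real (⋂ j ∈ S, (E j)ᶜ) + #(S \ T) • (2 * p * μ.real (⋂ k ∈ T, (E k)ᶜ)) := by
        gcongr
        exact (measureReal_biUnion_finset_le _ _).trans (sum_le_card_nsmul _ _ _ hbound)
  rw [nsmul_eq_mul] at this
  nlinarith [measureReal_nonneg (μ := μ) (s := ⋂ j ∈ T, (E j)ᶜ)]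

/-- Dropping the events of `Γ i` from the conditioning makes `E i` independent of it, and by
induction this costs at most a factor `2`. -/
lemma measureReal_inter_biInter_compl_le (hp : ∀ i, μ.real (E i) ≤ p)
    (hΓ : ∀ i, 4 * p * (#(Γ i) + 1) ≤ 1)
    (hindep : ∀ i (S : Finset ι), i ∉ S → Disjoint S (Γ i) →
      IndepSet (E i) (⋂ j ∈ S, (E j)ᶜ) μ)
    (S : Finset ι) {i : ι} (hi : i ∉ S) :
    μ.real (E i ∩ ⋂ j ∈ S, (E j)ᶜ) ≤ 2 * p * μ.real (⋂ j ∈ S, (E j)ᶜ) := by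
  classical
  induction S using Finset.strongInduction generalizing i with
  | H S ih =>
  set T := {j ∈ S | j ∉ Γ i}
  have hTS : T ⊆ S := filter_subset _ _
  have hp0 : 0 ≤ p := measureReal_nonneg.trans (hp i)
  have hT : μ.real (⋂ j ∈ T, (E j)ᶜ) ≤ 2 * μ.real (⋂ j ∈ S, (E j)ᶜ) := by
    refine measureReal_biInter_compl_le_two_mul (p := p) (fun j hj => ?_) ?_
    · obtain ⟨hjS, hjT⟩ := mem_sdiff.1 hj
      exact ih T (hTS.ssubset_of_not_subset fun h => hjT (h hjS)) hjT
    · have hcard : (#(S \ T) : ℝ) ≤ #(Γ i) := by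
        refine Nat.cast_le.2 (card_le_card fun j hj => ?_)
        obtain ⟨hjS, hjT⟩ := mem_sdiff.1 hj
        exact not_not.1 fun hjΓ => hjT (mem_filter.2 ⟨hjS, hjΓ⟩)
      nlinarith [hΓ i]
  have hindepT := hindep i T (fun h => hi (hTS h)) (disjoint_left.2 fun _ hj => (mem_filter.1 hj).2)
  calc μ.real (E i ∩ ⋂ j ∈ S, (E j)ᶜ)
      ≤ μ.real (E i ∩ ⋂ j ∈ T, (E j)ᶜ) :=
        measureReal_mono (Set.inter_subset_inter_right _ (Set.biInter_subset_biInter_left hTS))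
    _ = μ.real (E i) * μ.real (⋂ j ∈ T, (E j)ᶜ) := hindepT.measureReal_inter_eq_mul
    _ ≤ p * (2 * μ.real (⋂ j ∈ S, (E j)ᶜ)) := mul_le_mul (hp i) hT measureReal_nonneg hp0
    _ = 2 * p * μ.real (⋂ j ∈ S, (E j)ᶜ) := by ring

lemma measureReal_biInter_compl_pos (hE : ∀ i, MeasurableSet (E i))
    (hp : ∀ i, μ.real (E i) ≤ p) (hΓ : ∀ i, 4 * p * (#(Γ i) + 1) ≤ 1)
    (hindep : ∀ i (S : Finset ι), i ∉ S → Disjoint S (Γ i) →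
      IndepSet (E i) (⋂ j ∈ S, (E j)ᶜ) μ)
    (S : Finset ι) : 0 < μ.real (⋂ j ∈ S, (E j)ᶜ) := by
  classical
  induction S using Finset.induction_on with
  | empty => simp
  | insert j S hj ih =>
    have hp0 : 0 ≤ p := measureReal_nonneg.trans (hp j)
    have hsplit := measureReal_inter_add_sdiff (μ := μ) (s := ⋂ k ∈ S, (E k)ᶜ) (hE j)
    have hbound := measureReal_inter_biInter_compl_le hp hΓ hindep S hj
    rw [Set.inter_comm] at hsplit
    rw [set_biInter_insert, Set.inter_comm, ← Set.sdiff_eq]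
    nlinarith [hΓ j]

theorem lovasz_local_lemma [Fintype ι] (hE : ∀ i, MeasurableSet (E i))
    (hp : ∀ i, μ.real (E i) ≤ p) (hΓ : ∀ i, 4 * p * (#(Γ i) + 1) ≤ 1)
    (hindep : ∀ i (S : Finset ι), i ∉ S → Disjoint S (Γ i) →
      IndepSet (E i) (⋂ j ∈ S, (E j)ᶜ) μ) :
    0 < μ.real (⋂ i, (E i)ᶜ) := by
  simpa using measureReal_biInter_compl_pos hE hp hΓ hindep univ

end LocalLemma

lemma indepSet_pi_of_dependsOn {ι : Type*} [Fintype ι] {X : ι → Type*}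
    [∀ i, MeasurableSpace (X i)] [∀ i, MeasurableSingletonClass (X i)] [∀ i, Countable (X i)]
    {ν : ∀ i, Measure (X i)} [∀ i, IsProbabilityMeasure (ν i)] {A B : Set (∀ i, X i)}
    {s t : Finset ι} (hA : DependsOn (· ∈ A) s) (hB : DependsOn (· ∈ B) t) (hst : Disjoint s t) :
    IndepSet A B (Measure.pi ν) := by
  have hindep := (iIndepFun_pi (X := fun _ x => x) (μ := ν) fun _ => aemeasurable_id)
    |>.indepFun_finset s t hst fun i => measurable_pi_apply i
  have hpre : ∀ {C : Set (∀ i, X i)} {u : Finset ι}, DependsOn (· ∈ C) u →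
      C = (fun ω (i : u) => ω i) ⁻¹' ((fun ω (i : u) => ω i) '' C) := by
    intro C u hC
    ext ω
    refine ⟨fun h => ⟨ω, h, rfl⟩, fun ⟨ω', hω', heq⟩ => ?_⟩
    exact cast (hC fun i hi => congrFun heq ⟨i, hi⟩) hω'
  rw [hpre hA, hpre hB]
  exact (indepFun_iff_indepSet_preimage (by fun_prop) (by fun_prop)).1 hindep _ _
    (Set.to_countable _).measurableSet (Set.to_countable _).measurableSet

lemma hasSubgaussianMGF_pi_bernoulliMeasure {V : Type*} [Fintype V] (p : I) (u : V) :
    HasSubgaussianMGF (fun ω : V → Bool => (if ω u then 1 else 0) - (p : ℝ)) (1 / 4)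
      (Measure.pi fun _ : V => Ber(true, false, p)) := by
  have hIcc : ∀ ω : V → Bool, (if ω u then 1 else 0) - (p : ℝ) ∈ Set.Icc (-p : ℝ) (1 - p) :=
    fun ω => by by_cases h : ω u <;> simp [h]
  have hmean : ∫ ω : V → Bool, (if ω u then 1 else 0) - (p : ℝ)
      ∂(Measure.pi fun _ : V => Ber(true, false, p)) = 0 := by
    rw [integral_comp_eval (X := fun _ : V => Bool) (μ := fun _ => Ber(true, false, p))
      (f := fun b => (if b then 1 else 0) - (p : ℝ)) Measurable.of_discrete.aestronglyMeasurable,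
      integral_bernoulliMeasure]
    simp only [if_true, Bool.false_eq_true, if_false, smul_eq_mul]
    ring
  have h := hasSubgaussianMGF_of_mem_Icc_of_integral_eq_zero
    Measurable.of_discrete.aemeasurable (ae_of_all _ hIcc) hmean
  norm_num at h
  exact h

lemma measureReal_le_abs_card_filter_sub_le {V : Type*} [Fintype V] (p : I) (s : Finset V)
    {t : ℝ} (ht : 0 ≤ t) :
    (Measure.pi fun _ : V => Ber(true, false, p)).real
        {ω | t ≤ |(#{u ∈ s | ω u} : ℝ) - p * #s|}
      ≤ 2 * exp (-2 * t ^ 2 / #s) := by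
  set μ := Measure.pi fun _ : V => Ber(true, false, p)
  set Y : V → (V → Bool) → ℝ := fun u ω => (if ω u then 1 else 0) - p
  have hY : iIndepFun Y μ :=
    iIndepFun_pi (X := fun _ (b : Bool) => (if b then 1 else 0 : ℝ) - p)
      fun _ => Measurable.of_discrete.aemeasurable
  have hsum := HasSubgaussianMGF.sum_of_iIndepFun hY (s := s)
    fun u _ => hasSubgaussianMGF_pi_bernoulliMeasure p u
  have hcount : ∀ ω : V → Bool, ∑ u ∈ s, Y u ω = #{u ∈ s | ω u} - p * #s := by
    intro ω
    simp [Y, sum_sub_distrib, sum_boole, mul_comm]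
  have hexp : -t ^ 2 / (2 * ∑ u ∈ s, (1 / 4 : NNReal)) = -2 * t ^ 2 / #s := by
    simp only [sum_const, nsmul_eq_mul, NNReal.coe_mul, NNReal.coe_natCast, one_div,
      NNReal.coe_inv, NNReal.coe_ofNat]
    ring
  calc μ.real {ω | t ≤ |(#{u ∈ s | ω u} : ℝ) - p * #s|}
      ≤ μ.real ({ω | t ≤ ∑ u ∈ s, Y u ω} ∪ {ω | t ≤ -∑ u ∈ s, Y u ω}) := by
        refine measureReal_mono fun ω hω => ?_
        rw [Set.mem_union, Set.mem_ofPred_eq, Set.mem_ofPred_eq, hcount]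
        exact le_abs.1 hω
    _ ≤ μ.real {ω | t ≤ ∑ u ∈ s, Y u ω} + μ.real {ω | t ≤ -∑ u ∈ s, Y u ω} :=
        measureReal_union_le _ _
    _ ≤ exp (-2 * t ^ 2 / #s) + exp (-2 * t ^ 2 / #s) := by
        rw [← hexp]
        exact add_le_add (hsum.measure_ge_le ht) (hsum.neg.measure_ge_le ht)
    _ = 2 * exp (-2 * t ^ 2 / #s) := by ring

theorem lovasz_local_lemma_pi {ι κ : Type*} [Fintype ι] [Fintype κ] {X : κ → Type*}
    [∀ k, MeasurableSpace (X k)] [∀ k, MeasurableSingletonClass (X k)] [∀ k, Countable (X k)]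
    {ν : ∀ k, Measure (X k)} [∀ k, IsProbabilityMeasure (ν k)] {E : ι → Set (∀ k, X k)}
    {N : ι → Finset κ} (hdep : ∀ i, DependsOn (· ∈ E i) (N i)) {Γ : ι → Finset ι}
    (hΓ : ∀ i j, j ≠ i → ¬Disjoint (N i) (N j) → j ∈ Γ i) {p : ℝ}
    (hp : ∀ i, (Measure.pi ν).real (E i) ≤ p) (hpΓ : ∀ i, 4 * p * (#(Γ i) + 1) ≤ 1) :
    ∃ ω, ∀ i, ω ∉ E i := by
  classical
  have hindep : ∀ i (S : Finset ι), i ∉ S → Disjoint S (Γ i) →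
      IndepSet (E i) (⋂ j ∈ S, (E j)ᶜ) (Measure.pi ν) := by
    intro i S hi hS
    refine indepSet_pi_of_dependsOn (hdep i) (t := S.biUnion N) (fun ω ω' h => ?_) ?_
    · have hE : ∀ j ∈ S, (ω ∈ E j) = (ω' ∈ E j) := fun j hj =>
        hdep j fun u hu => h u (mem_coe.2 (mem_biUnion.2 ⟨j, hj, hu⟩))
      simp only [Set.mem_iInter, Set.mem_compl_iff]
      exact propext (forall₂_congr fun j hj => by rw [hE j hj])
    · rw [disjoint_biUnion_right]
      exact fun j hj => not_not.1 fun h => disjoint_left.1 hS hj (hΓ i j (fun e => hi (e ▸ hj)) h)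
  have hpos := lovasz_local_lemma (fun _ => (Set.to_countable _).measurableSet) hp hpΓ hindep
  obtain ⟨ω, hω⟩ : (⋂ i, (E i)ᶜ).Nonempty :=
    Set.nonempty_iff_ne_empty.2 fun h => by simp [h] at hpos
  exact ⟨ω, Set.mem_iInter.1 hω⟩

end ProbabilityTheory

theorem exists_finset_forall_abs_card_inter_sub_le {ι V : Type*} [Fintype ι] [Fintype V]
    [DecidableEq V] (N : ι → Finset V) (Γ : ι → Finset ι) {k D : ℕ} (p : I) {γ : ℝ}
    (hγ : 0 ≤ γ) (hN : ∀ i, #(N i) = k)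
    (hΓ : ∀ i j, j ≠ i → ¬Disjoint (N i) (N j) → j ∈ Γ i) (hΓD : ∀ i, #(Γ i) ≤ D)
    (hD : 8 * exp (-2 * γ ^ 2 * k) * (D + 1) ≤ 1) :
    ∃ A : Finset V, ∀ i, |(#(N i ∩ A) : ℝ) - p * k| ≤ γ * k := by
  set E : ι → Set (V → Bool) := fun i => {ω | γ * k < |(#{u ∈ N i | ω u} : ℝ) - p * k|}
  have hdep : ∀ i, DependsOn (· ∈ E i) (N i) := by
    intro i ω ω' h
    have : {u ∈ N i | ω u} = {u ∈ N i | ω' u} := filter_congr fun u hu => by rw [h u hu]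
    simp only [E, Set.mem_ofPred_eq, this]
  have hprob : ∀ i, (Measure.pi fun _ : V => Ber(true, false, p)).real (E i)
      ≤ 2 * exp (-2 * γ ^ 2 * k) := by
    intro i
    calc _ ≤ (Measure.pi fun _ : V => Ber(true, false, p)).real
          {ω | γ * #(N i) ≤ |(#{u ∈ N i | ω u} : ℝ) - p * #(N i)|} :=
          measureReal_mono fun ω (hω : ω ∈ E i) => by rw [Set.mem_ofPred_eq, hN i]; exact hω.le
      _ ≤ 2 * exp (-2 * (γ * #(N i)) ^ 2 / #(N i)) :=
          measureReal_le_abs_card_filter_sub_le p (N i) (by positivity)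
      _ = 2 * exp (-2 * γ ^ 2 * k) := by
          rcases eq_or_ne (k : ℝ) 0 with hk | hk
          · simp [hN i, hk]
          · rw [hN i]
            field_simp
  have hpΓ : ∀ i, 4 * (2 * exp (-2 * γ ^ 2 * k)) * (#(Γ i) + 1) ≤ 1 := fun i => calc
    _ = 8 * exp (-2 * γ ^ 2 * k) * (#(Γ i) + 1) := by ring
    _ ≤ 8 * exp (-2 * γ ^ 2 * k) * (D + 1) := by gcongr; exact_mod_cast hΓD i
    _ ≤ 1 := hD
  obtain ⟨ω, hω⟩ := lovasz_local_lemma_pi hdep hΓ hprob hpΓ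
  refine ⟨({u | ω u} : Finset V), fun i => ?_⟩
  simpa [E, inter_filter] using hω i

lemma SimpleGraph.mem_biUnion_neighborFinset_of_not_disjoint {V : Type*} [Fintype V]
    [DecidableEq V] {G : SimpleGraph V} [DecidableRel G.Adj] {v w : V}
    (h : ¬Disjoint (G.neighborFinset v) (G.neighborFinset w)) :
    w ∈ (G.neighborFinset v).biUnion fun u => G.neighborFinset u := by
  obtain ⟨u, hvu, hwu⟩ := not_disjoint_iff.1 h
  rw [mem_neighborFinset] at hwu
  exact mem_biUnion.2 ⟨u, hvu, (mem_neighborFinset _ _ _).2 hwu.symm⟩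

lemma tendsto_exp_neg_mul_mul_sq_add_one {b : ℝ} (hb : 0 < b) :
    Tendsto (fun x : ℝ => exp (-b * x) * (x ^ 2 + 1)) atTop (𝓝 0) := by
  have h2 := tendsto_rpow_mul_exp_neg_mul_atTop_nhds_zero 2 b hb
  have h0 := tendsto_rpow_mul_exp_neg_mul_atTop_nhds_zero 0 b hb
  simp only [rpow_two, rpow_zero, one_mul] at h2 h0
  convert h2.add h0 using 1
  · ext x
    ring
  · simp

/-- For every real `c` with `0 < c < 1` and every `γ > 0`, there exists `d₀ ∈ ℕ` such that
every `d`-regular finite simple graph with `d ≥ d₀` has a vertex subset `A` with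
`c·d − γ·d ≤ |N_G(v) ∩ A| ≤ c·d + γ·d` for every vertex `v`. -/
theorem exists_balanced_subset (c γ : ℝ) (hc0 : 0 < c) (hc1 : c < 1) (hγ : 0 < γ) :
    ∃ d₀ : ℕ, ∀ (V : Type) [Fintype V] [DecidableEq V] (G : SimpleGraph V)
      [DecidableRel G.Adj] (d : ℕ), d₀ ≤ d → G.IsRegularOfDegree d →
      ∃ A : Finset V, ∀ v : V,
        c * d - γ * d ≤ ((G.neighborFinset v ∩ A).card : ℝ) ∧
        ((G.neighborFinset v ∩ A).card : ℝ) ≤ c * d + γ * d := by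
  have hlim := ((tendsto_exp_neg_mul_mul_sq_add_one (by positivity : 0 < 2 * γ ^ 2)).comp
    tendsto_natCast_atTop_atTop).const_mul 8
  obtain ⟨d₀, hd₀⟩ := eventually_atTop.1
    (hlim.eventually (eventually_le_nhds (by norm_num : (8 : ℝ) * 0 < 1)))
  refine ⟨d₀, fun V _ _ G _ d hd hG => ?_⟩
  have hdeg : ∀ v, #(G.neighborFinset v) = d := fun v =>
    (G.card_neighborFinset_eq_degree v).trans (hG v)
  obtain ⟨A, hA⟩ := exists_finset_forall_abs_card_inter_sub_le (fun v => G.neighborFinset v)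
    (fun v => (G.neighborFinset v).biUnion fun u => G.neighborFinset u) (D := d ^ 2)
    ⟨c, hc0.le, hc1.le⟩ hγ.le hdeg (fun _ _ _ => mem_biUnion_neighborFinset_of_not_disjoint)
    (fun v => (card_biUnion_le_card_mul _ _ d fun u _ => (hdeg u).le).trans_eq (by rw [hdeg, sq]))
    (by simpa [mul_assoc] using hd₀ d hd)
  exact ⟨A, fun v => by have := abs_sub_le_iff.1 (hA v); constructor <;> linarith⟩
end

section
/- Let G be an (n, d, λ)-graph and let B be a subset of its vertices with |B| = b ≥ 2. Let m denote the number of edges of the induced subgraph G[B] and set p = m / (b choose 2). Then |p − d/n| ≤ (λ + 1)/(b − 1). -/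
open SimpleGraph

/-- The adjacency matrix of a simple graph over `ℝ` is Hermitian. -/
theorem adjMatrix_isHermitian {n : ℕ} (G : SimpleGraph (Fin n)) [DecidableRel G.Adj] :
    (G.adjMatrix ℝ).IsHermitian :=
  Matrix.IsHermitian.ext fun i j => by
    simp [SimpleGraph.adjMatrix_apply, SimpleGraph.adj_comm]

/-- The eigenvalues of the adjacency matrix of `G`. -/
noncomputable def adjEigenvalues {n : ℕ} (G : SimpleGraph (Fin n)) [DecidableRel G.Adj] :
    Fin n → ℝ :=
  (adjMatrix_isHermitian G).eigenvalues

/-- `G` is an `(n, d, λ)`-graph: a `d`-regular graph on `n` vertices all of whose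
eigenvalues, except the largest one, are at most `lam` in absolute value. -/
def IsNDLGraph {n : ℕ} (G : SimpleGraph (Fin n)) [DecidableRel G.Adj] (d : ℕ) (lam : ℝ) : Prop :=
  G.IsRegularOfDegree d ∧
  ∃ i₀ : Fin n, ∀ i : Fin n, i ≠ i₀ → |adjEigenvalues G i| ≤ lam

/-!
Let `x` be the indicator vector of `B` and `u` the all-ones vector, an eigenvector of the
adjacency matrix `A` with eigenvalue `d`. Then `⟪x, A x⟫ = 2m`, and splitting off the component
of `x` along `u` leaves a remainder `y ⊥ u` with `⟪x, A x⟫ = d b² / n + ⟪y, A y⟫` and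
`‖y‖² ≤ b`. All eigenvalues of `A` have modulus at most `d` (Gershgorin), so either the exceptional
eigenvalue also has modulus at most `λ`, or `d` is no other eigenvalue and `u` spans the
exceptional eigenline; either way `|⟪y, A y⟫| ≤ λ ‖y‖²`, i.e. `|2m - d b² / n| ≤ λ b`.
Finally `d b² / n` differs from `(d / n) b (b - 1)` by `(d / n) b ≤ b`; divide by `b (b - 1)`.
-/

open scoped RealInnerProductSpace

section InnerProductSpace

variable {E ι : Type*} [NormedAddCommGroup E] [InnerProductSpace ℝ E] [Fintype ι]

lemma real_inner_sub_proj_eq_zero (u x : E) : ⟪u, x - (⟪u, x⟫ / ⟪u, u⟫) • u⟫ = 0 := by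
  rcases eq_or_ne u 0 with rfl | hu0
  · simp
  rw [inner_sub_right, real_inner_smul_right, div_mul_cancel₀ _ (inner_self_ne_zero.mpr hu0),
    sub_self]

lemma real_inner_sub_proj_self_le (u x : E) :
    ⟪x - (⟪u, x⟫ / ⟪u, u⟫) • u, x - (⟪u, x⟫ / ⟪u, u⟫) • u⟫ ≤ ⟪x, x⟫ := by
  rcases eq_or_ne u 0 with rfl | hu0
  · simp
  have huu : 0 < ⟪u, u⟫ := real_inner_self_pos.mpr hu0
  have hproj : ⟪x - (⟪u, x⟫ / ⟪u, u⟫) • u, x - (⟪u, x⟫ / ⟪u, u⟫) • u⟫ =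
      ⟪x, x⟫ - ⟪u, x⟫ ^ 2 / ⟪u, u⟫ := by
    simp only [inner_sub_left, inner_sub_right, real_inner_smul_left, real_inner_smul_right,
      real_inner_comm x u]
    field_simp
    ring
  rw [hproj]
  linarith [div_nonneg (sq_nonneg ⟪u, x⟫) huu.le]

lemma OrthonormalBasis.inner_eq_zero_of_forall_ne_inner_eq_zero [DecidableEq ι]
    (v : OrthonormalBasis ι ℝ E) {i₀ : ι} {u y : E} (hu : u ≠ 0)
    (hv : ∀ j, j ≠ i₀ → ⟪v j, u⟫ = 0) (hy : ⟪u, y⟫ = 0) : ⟪v i₀, y⟫ = 0 := by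
  have hu_eq : u = ⟪v i₀, u⟫ • v i₀ := by
    conv_lhs => rw [← v.sum_repr' u]
    exact Finset.sum_eq_single i₀ (fun j _ hj => by rw [hv j hj, zero_smul]) (by simp)
  have hc : ⟪v i₀, u⟫ ≠ 0 := fun h => hu (by rw [hu_eq, h, zero_smul])
  rw [hu_eq, real_inner_smul_left] at hy
  exact (mul_eq_zero.mp hy).resolve_left hc

namespace LinearMap.IsSymmetric

variable {T : E →ₗ[ℝ] E}

lemma inner_eq_zero_of_eigenvalue_ne (hT : T.IsSymmetric) {a b : E} {α β : ℝ}
    (ha : T a = α • a) (hb : T b = β • b) (hαβ : α ≠ β) : ⟪a, b⟫ = 0 := by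
  have h : α * ⟪a, b⟫ = β * ⟪a, b⟫ := by
    rw [← real_inner_smul_left, ← real_inner_smul_right, ← ha, ← hb, hT]
  exact (mul_eq_mul_right_iff.mp h).resolve_left hαβ

lemma abs_inner_map_self_le (hT : T.IsSymmetric) (v : OrthonormalBasis ι ℝ E) {μ : ι → ℝ}
    (hv : ∀ i, T (v i) = μ i • v i) {lam : ℝ} {y : E}
    (h : ∀ i, |μ i| ≤ lam ∨ ⟪v i, y⟫ = 0) : |⟪y, T y⟫| ≤ lam * ⟪y, y⟫ := by
  have hcoord : ∀ i, ⟪v i, T y⟫ = μ i * ⟪v i, y⟫ := fun i => by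
    rw [← hT, hv, real_inner_smul_left]
  rw [← v.sum_inner_mul_inner y (T y), ← v.sum_inner_mul_inner y y, Finset.mul_sum]
  refine (Finset.abs_sum_le_sum_abs _ _).trans (Finset.sum_le_sum fun i _ => ?_)
  rw [hcoord, real_inner_comm (v i) y, mul_left_comm, abs_mul, abs_mul_self]
  rcases h i with hμ | hy
  · exact mul_le_mul_of_nonneg_right hμ (mul_self_nonneg _)
  · simp [hy]

lemma abs_inner_map_self_le_of_inner_eigenvector_eq_zero [DecidableEq ι] (hT : T.IsSymmetric)
    (v : OrthonormalBasis ι ℝ E) {μ : ι → ℝ} (hv : ∀ i, T (v i) = μ i • v i)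
    {u : E} {d : ℝ} (hu : T u = d • u) (hu0 : u ≠ 0) (hμd : ∀ i, |μ i| ≤ d)
    {lam : ℝ} {i₀ : ι} (hlam : ∀ i, i ≠ i₀ → |μ i| ≤ lam) {y : E} (hy : ⟪u, y⟫ = 0) :
    |⟪y, T y⟫| ≤ lam * ⟪y, y⟫ := by
  refine hT.abs_inner_map_self_le v hv fun i => ?_
  by_cases hi : i = i₀
  swap
  · exact .inl (hlam i hi)
  subst hi
  by_cases hμ : |μ i| ≤ lam
  · exact .inl hμ
  -- now `d ≥ |μ i| > lam`, so `d` is no other eigenvalue and `u` is proportional to `v i`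
  have hperp : ∀ j, j ≠ i → ⟪v j, u⟫ = 0 := fun j hj =>
    hT.inner_eq_zero_of_eigenvalue_ne (hv j) hu fun h =>
      hμ ((hμd i).trans (h ▸ le_abs_self (μ j)) |>.trans (hlam j hj))
  exact .inr (v.inner_eq_zero_of_forall_ne_inner_eq_zero hu0 hperp hy)

lemma inner_map_self_eq_add_inner_map_self_sub_proj (hT : T.IsSymmetric) {u : E} {d : ℝ}
    (hu : T u = d • u) (x : E) :
    ⟪x, T x⟫ = d * ⟪u, x⟫ ^ 2 / ⟪u, u⟫ +
      ⟪x - (⟪u, x⟫ / ⟪u, u⟫) • u, T (x - (⟪u, x⟫ / ⟪u, u⟫) • u)⟫ := by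
  rcases eq_or_ne u 0 with rfl | hu0
  · simp
  have huu : ⟪u, u⟫ ≠ 0 := inner_self_ne_zero.mpr hu0
  have hux : ⟪u, T x⟫ = d * ⟪u, x⟫ := by rw [← hT, hu, real_inner_smul_left]
  simp only [map_sub, map_smul, inner_sub_left, inner_sub_right, real_inner_smul_left,
    real_inner_smul_right, hux, hu, real_inner_comm x u]
  field_simp
  ring

lemma abs_inner_map_self_sub_le [DecidableEq ι] (hT : T.IsSymmetric)
    (v : OrthonormalBasis ι ℝ E) {μ : ι → ℝ} (hv : ∀ i, T (v i) = μ i • v i)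
    {u : E} {d : ℝ} (hu : T u = d • u) (hu0 : u ≠ 0) (hμd : ∀ i, |μ i| ≤ d)
    {lam : ℝ} {i₀ : ι} (hlam : ∀ i, i ≠ i₀ → |μ i| ≤ lam) (hlam0 : 0 ≤ lam) (x : E) :
    |⟪x, T x⟫ - d * ⟪u, x⟫ ^ 2 / ⟪u, u⟫| ≤ lam * ⟪x, x⟫ := by
  set y := x - (⟪u, x⟫ / ⟪u, u⟫) • u
  have hy : ⟪u, y⟫ = 0 := real_inner_sub_proj_eq_zero u x
  rw [hT.inner_map_self_eq_add_inner_map_self_sub_proj hu x, add_sub_cancel_left]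
  calc |⟪y, T y⟫| ≤ lam * ⟪y, y⟫ :=
        hT.abs_inner_map_self_le_of_inner_eigenvector_eq_zero v hv hu hu0 hμd hlam hy
    _ ≤ lam * ⟪x, x⟫ := mul_le_mul_of_nonneg_left (real_inner_sub_proj_self_le u x) hlam0

end LinearMap.IsSymmetric

end InnerProductSpace

section Graph

open Finset Matrix

lemma SimpleGraph.sum_sum_adj_eq_two_mul_ncard_edgeSet_induce {V : Type*} (G : SimpleGraph V)
    [DecidableRel G.Adj] (B : Finset V) :
    ∑ i ∈ B, ∑ j ∈ B, (if G.Adj i j then 1 else 0) = 2 * (G.induce (B : Set V)).edgeSet.ncard := by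
  set H := G.induce (B : Set V)
  have hdeg : ∀ v : (B : Set V), H.degree v = ∑ j ∈ B, if G.Adj v j then 1 else 0 := by
    intro v
    rw [← card_neighborFinset_eq_degree, neighborFinset_eq_filter, card_filter]
    exact sum_coe_sort B fun j => if G.Adj v j then 1 else 0
  rw [← coe_edgeFinset, Set.ncard_coe_finset, ← sum_degrees_eq_twice_card_edges,
    ← sum_coe_sort B]
  exact sum_congr rfl fun v _ => (hdeg v).symm

variable {V : Type*} [Fintype V] [DecidableEq V]

lemma SimpleGraph.indicator_dotProduct_adjMatrix_mulVec (G : SimpleGraph V) [DecidableRel G.Adj]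
    (B : Finset V) :
    (fun i => if i ∈ B then (1 : ℝ) else 0) ⬝ᵥ G.adjMatrix ℝ *ᵥ (fun i => if i ∈ B then 1 else 0) =
      2 * (G.induce (B : Set V)).edgeSet.ncard := by
  rw [← Nat.cast_ofNat, ← Nat.cast_mul, ← G.sum_sum_adj_eq_two_mul_ncard_edgeSet_induce B,
    dotProduct_mulVec_adjMatrix]
  simp [← sum_filter, inter_comm, inter_filter]

lemma SimpleGraph.IsRegularOfDegree.abs_eigenvalues_le {G : SimpleGraph V} [DecidableRel G.Adj]
    {d : ℕ} (hG : G.IsRegularOfDegree d) (hA : (G.adjMatrix ℝ).IsHermitian) (i : V) :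
    |hA.eigenvalues i| ≤ d := by
  have hμ : Module.End.HasEigenvalue (toLin' (G.adjMatrix ℝ)) (hA.eigenvalues i) := by
    rw [Module.End.hasEigenvalue_iff_mem_spectrum, spectrum_toLin']
    exact hA.eigenvalues_mem_spectrum_real i
  obtain ⟨k, hk⟩ := eigenvalue_mem_ball hμ
  have hrow : ∑ j, |if G.Adj k j then (1 : ℝ) else 0| = d := by
    simp [apply_ite, sum_boole, ← neighborFinset_eq_filter, hG k]
  simpa [Real.dist_eq, hrow] using hk

end Graph

lemma IsNDLGraph.lam_nonneg {n d : ℕ} {lam : ℝ} {G : SimpleGraph (Fin n)} [DecidableRel G.Adj]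
    (hG : IsNDLGraph G d lam) (hn : 2 ≤ n) : 0 ≤ lam := by
  obtain ⟨-, i₀, hlam⟩ := hG
  have : Nontrivial (Fin n) := Fin.nontrivial_iff_two_le.mpr hn
  obtain ⟨i, hi⟩ := exists_ne i₀
  exact (abs_nonneg _).trans (hlam i hi)

lemma IsNDLGraph.abs_two_mul_ncard_edgeSet_induce_sub_le {n d : ℕ} {lam : ℝ}
    {G : SimpleGraph (Fin n)} [DecidableRel G.Adj] (hG : IsNDLGraph G d lam) (hlam0 : 0 ≤ lam)
    (B : Finset (Fin n)) :
    |2 * ((G.induce (B : Set (Fin n))).edgeSet.ncard : ℝ) - d * (B.card : ℝ) ^ 2 / n|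
      ≤ lam * B.card := by
  obtain ⟨hreg, i₀, hlam⟩ := hG
  have hA := adjMatrix_isHermitian G
  have hT : (Matrix.toEuclideanLin (G.adjMatrix ℝ)).IsSymmetric :=
    Matrix.isSymmetric_toEuclideanLin_iff.mpr hA
  have hv : ∀ i, Matrix.toEuclideanLin (G.adjMatrix ℝ) (hA.eigenvectorBasis i) =
      adjEigenvalues G i • hA.eigenvectorBasis i := fun i =>
    congrArg (WithLp.toLp 2) (hA.mulVec_eigenvectorBasis i)
  set u : EuclideanSpace ℝ (Fin n) := WithLp.toLp 2 (fun _ => 1)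
  set x : EuclideanSpace ℝ (Fin n) := WithLp.toLp 2 (fun i => if i ∈ B then 1 else 0)
  have hu : Matrix.toEuclideanLin (G.adjMatrix ℝ) u = (d : ℝ) • u :=
    congrArg (WithLp.toLp 2) (funext fun k => by simp [u, hreg k])
  have hu0 : u ≠ 0 := fun h => by simpa [u] using congrArg (· i₀) h
  have hmix := hT.abs_inner_map_self_sub_le hA.eigenvectorBasis hv hu hu0
    (hreg.abs_eigenvalues_le hA) hlam hlam0 x
  have hxTx : ⟪x, Matrix.toEuclideanLin (G.adjMatrix ℝ) x⟫ =
      2 * ((G.induce (B : Set (Fin n))).edgeSet.ncard : ℝ) := by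
    rw [← G.indicator_dotProduct_adjMatrix_mulVec B, dotProduct_comm]
    rfl
  have hux : ⟪u, x⟫ = B.card := by
    rw [EuclideanSpace.inner_toLp_toLp]; simp [dotProduct]
  have huu : ⟪u, u⟫ = n := by
    rw [EuclideanSpace.inner_toLp_toLp]; simp [dotProduct]
  have hxx : ⟪x, x⟫ = B.card := by
    rw [EuclideanSpace.inner_toLp_toLp]; simp [dotProduct]
  rwa [hxTx, hux, huu, hxx] at hmix

lemma abs_div_choose_two_sub_le {m q lam : ℝ} {b : ℕ} (hb : 2 ≤ b) (hq0 : 0 ≤ q) (hq1 : q ≤ 1)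
    (h : |2 * m - q * b ^ 2| ≤ lam * b) :
    |m / (b.choose 2 : ℝ) - q| ≤ (lam + 1) / ((b : ℝ) - 1) := by
  have hb1 : (0 : ℝ) < b - 1 := by
    have : (2 : ℝ) ≤ b := by exact_mod_cast hb
    linarith
  have hpos : (0 : ℝ) < b * (b - 1) := mul_pos (by linarith) hb1
  have hdiff : |2 * m - q * (b * (b - 1))| ≤ (lam + 1) * b :=
    calc |2 * m - q * (b * (b - 1))| = |(2 * m - q * b ^ 2) + q * b| := by ring_nf
      _ ≤ |2 * m - q * b ^ 2| + |q * b| := abs_add_le _ _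
      _ ≤ lam * b + 1 * b := by
          rw [abs_of_nonneg (mul_nonneg hq0 b.cast_nonneg)]
          exact add_le_add h (mul_le_mul_of_nonneg_right hq1 b.cast_nonneg)
      _ = (lam + 1) * b := by ring
  have hrw : m / (b.choose 2 : ℝ) - q = (2 * m - q * (b * (b - 1))) / (b * (b - 1)) := by
    rw [Nat.cast_choose_two]
    field_simp
  rw [hrw, abs_div, abs_of_pos hpos, div_le_div_iff₀ hpos hb1]
  linarith [mul_le_mul_of_nonneg_right hdiff hb1.le]

/-- If `G` is an `(n, d, λ)`-graph, `B` a set of `b ≥ 2` vertices, `m` the number of edges of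
the induced subgraph `G[B]` and `p = m / (b choose 2)`, then `|p − d/n| ≤ (λ + 1)/(b − 1)`. -/
theorem induced_density_close {n d : ℕ} (lam : ℝ) (G : SimpleGraph (Fin n))
    [DecidableRel G.Adj] (hG : IsNDLGraph G d lam) (B : Finset (Fin n)) (hB : 2 ≤ B.card) :
    |((G.induce (↑B : Set (Fin n))).edgeSet.ncard : ℝ) / (B.card.choose 2 : ℝ) - (d : ℝ) / n|
      ≤ (lam + 1) / ((B.card : ℝ) - 1) := by
  have hBn : B.card ≤ n := by simpa using B.card_le_univ
  have hdn : d ≤ n := by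
    obtain ⟨v, -⟩ := Finset.card_pos.mp (by omega : 0 < B.card)
    simpa [hG.1 v] using (G.degree_lt_card_verts v).le
  have hmix := hG.abs_two_mul_ncard_edgeSet_induce_sub_le (hG.lam_nonneg (hB.trans hBn)) B
  refine abs_div_choose_two_sub_le hB (by positivity)
    (div_le_one_of_le₀ (by exact_mod_cast hdn) (Nat.cast_nonneg n)) ?_
  rwa [div_mul_eq_mul_div]
end

section
/- For every ξ > 0 there exist ε > 0 and n₀ ∈ ℕ such that the following holds. Let G be an (n, d, λ)-graph with n ≥ n₀ and λ < ε·d, let B be a subset of its vertices with |B| ≥ n/20, let m be the number of edges of the induced subgraph G[B], set b = |B| and p = m / (b choose 2). Then for every pair of disjoint subsets S, T ⊆ B with |S| ≥ ξ·n and |T| ≥ ξ·n, one has |e_G(S, T) − p·|S|·|T|| ≤ ξ·|S|·|T|·p. -/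
/-!
By the expander mixing lemma, `e(S, T) = (d/n)|S||T| ± λ√(|S||T|)`; as `|S|, |T| ≥ ξn` and
`λ < εd`, the error is at most `(ξ/4)(d/n)|S||T|`. Applied to `S = T = B`, the same lemma pins the
edge density `p` of `G[B]` to within `(λ + d/n)/(|B| - 1)` of `d/n`, which is at most `(ξ/4)(d/n)`
because `|B|` is linear in `n`. Replacing `d/n` by `p ≥ (d/n)/2` then gives the claim.
-/

open SimpleGraph

/-- `e_G(S, T)`: the number of edges of `G` with one endpoint in `S` and one endpoint in `T`,
where edges with both endpoints in `S ∩ T` are counted twice (ordered pair count). -/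
def edgeCountBetween {n : ℕ} (G : SimpleGraph (Fin n)) [DecidableRel G.Adj]
    (S T : Finset (Fin n)) : ℕ :=
  ((S ×ˢ T).filter fun p => G.Adj p.1 p.2).card

open Finset Matrix
open scoped InnerProductSpace

namespace Matrix.IsHermitian

variable {ι : Type*} [Fintype ι] [DecidableEq ι] {A : Matrix ι ι ℝ}

theorem toEuclideanLin_eigenvectorBasis (hA : A.IsHermitian) (i : ι) :
    toEuclideanLin A (hA.eigenvectorBasis i) = hA.eigenvalues i • hA.eigenvectorBasis i := by
  ext j
  simpa [toLpLin_apply] using congrFun (hA.mulVec_eigenvectorBasis i) j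

theorem inner_toEuclideanLin_eq_sum (hA : A.IsHermitian) (x y : EuclideanSpace ℝ ι) :
    ⟪x, toEuclideanLin A y⟫_ℝ = ∑ i, hA.eigenvalues i *
      ⟪hA.eigenvectorBasis i, x⟫_ℝ * ⟪hA.eigenvectorBasis i, y⟫_ℝ := by
  conv_lhs => rw [← hA.eigenvectorBasis.sum_repr' y]
  simp only [map_sum, map_smul, hA.toEuclideanLin_eigenvectorBasis, inner_sum,
    real_inner_smul_right, real_inner_comm x]
  exact sum_congr rfl fun i _ => by ring

theorem inner_eigenvectorBasis_toEuclideanLin (hA : A.IsHermitian) (i : ι)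
    (v : EuclideanSpace ℝ ι) :
    ⟪hA.eigenvectorBasis i, toEuclideanLin A v⟫_ℝ =
      hA.eigenvalues i * ⟪hA.eigenvectorBasis i, v⟫_ℝ := by
  rw [← (isSymmetric_toEuclideanLin_iff.2 hA), hA.toEuclideanLin_eigenvectorBasis,
    real_inner_smul_left]

theorem abs_inner_toEuclideanLin_sub_le (hA : A.IsHermitian) {i₀ : ι} {lam : ℝ}
    (hlam0 : 0 ≤ lam) (hlam : ∀ i, i ≠ i₀ → |hA.eigenvalues i| ≤ lam) (x y : EuclideanSpace ℝ ι) :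
    |⟪x, toEuclideanLin A y⟫_ℝ - hA.eigenvalues i₀ *
      ⟪hA.eigenvectorBasis i₀, x⟫_ℝ * ⟪hA.eigenvectorBasis i₀, y⟫_ℝ| ≤ lam * (‖x‖ * ‖y‖) := by
  set a := fun i => ⟪hA.eigenvectorBasis i, x⟫_ℝ
  set b := fun i => ⟪hA.eigenvectorBasis i, y⟫_ℝ
  have hcs : ∑ i ∈ univ.erase i₀, |a i| * |b i| ≤ ‖x‖ * ‖y‖ := calc
    _ ≤ ∑ i, |a i| * |b i| :=
      sum_le_sum_of_subset_of_nonneg (subset_univ _) fun i _ _ => by positivity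
    _ ≤ √(∑ i, |a i| ^ 2) * √(∑ i, |b i| ^ 2) := Real.sum_mul_le_sqrt_mul_sqrt _ _ _
    _ = ‖x‖ * ‖y‖ := by
      simp only [← Real.norm_eq_abs, a, b, OrthonormalBasis.sum_sq_norm_inner_right,
        Real.sqrt_sq (norm_nonneg _)]
  rw [hA.inner_toEuclideanLin_eq_sum, ← add_sum_erase _ _ (mem_univ i₀), add_sub_cancel_left]
  calc |∑ i ∈ univ.erase i₀, hA.eigenvalues i * a i * b i|
      ≤ ∑ i ∈ univ.erase i₀, lam * (|a i| * |b i|) := by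
        refine (abs_sum_le_sum_abs _ _).trans (sum_le_sum fun i hi => ?_)
        rw [abs_mul, abs_mul, mul_assoc]
        exact mul_le_mul_of_nonneg_right (hlam i (ne_of_mem_erase hi)) (by positivity)
    _ ≤ lam * (‖x‖ * ‖y‖) := by rw [← mul_sum]; exact mul_le_mul_of_nonneg_left hcs hlam0

/-- If `c` is a simple eigenvalue, attained at index `i₀` with eigenvector `v`, the `i₀`-th term
of the spectral expansion of `⟪x, A y⟫` is `c ⟪v, x⟫ ⟪v, y⟫ / ‖v‖ ^ 2`. -/
theorem eigenvalues_mul_inner_mul_inner_mul_norm_sq (hA : A.IsHermitian) {i₀ : ι} {c : ℝ}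
    {v : EuclideanSpace ℝ ι} (hv : toEuclideanLin A v = c • v)
    (hc : ∀ i, i ≠ i₀ → hA.eigenvalues i ≠ c) (x y : EuclideanSpace ℝ ι) :
    hA.eigenvalues i₀ * ⟪hA.eigenvectorBasis i₀, x⟫_ℝ * ⟪hA.eigenvectorBasis i₀, y⟫_ℝ * ‖v‖ ^ 2 =
      c * ⟪v, x⟫_ℝ * ⟪v, y⟫_ℝ := by
  set u := hA.eigenvectorBasis
  have hcoef (i : ι) : hA.eigenvalues i * ⟪u i, v⟫_ℝ = c * ⟪u i, v⟫_ℝ := by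
    rw [← hA.inner_eigenvectorBasis_toEuclideanLin, hv, real_inner_smul_right]
  set k := ⟪u i₀, v⟫_ℝ
  have hv_eq : v = k • u i₀ := by
    conv_lhs => rw [← u.sum_repr' v]
    refine sum_eq_single i₀ (fun i _ hi => ?_) (by simp)
    rw [(mul_eq_mul_right_iff.1 (hcoef i)).resolve_left (hc i hi), zero_smul]
  rw [hv_eq, norm_smul, u.orthonormal.1 i₀, real_inner_smul_left, real_inner_smul_left,
    Real.norm_eq_abs, mul_one, sq_abs]
  linear_combination (⟪u i₀, x⟫_ℝ * ⟪u i₀, y⟫_ℝ * k) * hcoef i₀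

end Matrix.IsHermitian

def indicatorVec {ι : Type*} [DecidableEq ι] (S : Finset ι) : EuclideanSpace ℝ ι :=
  WithLp.toLp 2 fun i => if i ∈ S then 1 else 0

section

variable {ι : Type*} [Fintype ι] [DecidableEq ι]

theorem inner_indicatorVec_left (S : Finset ι) (x : EuclideanSpace ℝ ι) :
    ⟪indicatorVec S, x⟫_ℝ = ∑ i ∈ S, x i := by
  simp [indicatorVec, PiLp.inner_apply]

theorem inner_indicatorVec_indicatorVec (S T : Finset ι) :
    ⟪indicatorVec S, indicatorVec T⟫_ℝ = #(S ∩ T) := by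
  rw [inner_indicatorVec_left]
  simp [indicatorVec]

theorem norm_indicatorVec (S : Finset ι) :
    ‖indicatorVec S‖ = √(#S : ℝ) := by
  rw [norm_eq_sqrt_real_inner, inner_indicatorVec_indicatorVec, inter_self]

end

theorem abs_div_choose_two_sub_mul_le {m b q lam : ℝ} (hb : 2 ≤ b) (hq : 0 ≤ q)
    (h : |2 * m - q * b * b| ≤ lam * b) : |m / (b * (b - 1) / 2) - q| * (b - 1) ≤ lam + q := by
  have key : (m / (b * (b - 1) / 2) - q) * (b - 1) = (2 * m - q * b * b) / b + q := by
    field_simp [show b - 1 ≠ 0 by linarith]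
    ring
  calc |m / (b * (b - 1) / 2) - q| * (b - 1) = |(2 * m - q * b * b) / b + q| := by
        rw [← key, abs_mul, abs_of_pos (by linarith : 0 < b - 1)]
    _ ≤ |2 * m - q * b * b| / b + q := by
        refine (abs_add_le _ _).trans ?_
        rw [abs_div, abs_of_pos (by linarith : 0 < b), abs_of_nonneg hq]
    _ ≤ lam + q := by
        gcongr
        rwa [div_le_iff₀ (by linarith)]

noncomputable def inducedEdgeDensity {n : ℕ} (G : SimpleGraph (Fin n)) (B : Finset (Fin n)) : ℝ :=
  ((G.induce (B : Set (Fin n))).edgeSet.ncard : ℝ) / (B.card.choose 2 : ℝ)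

section

variable {n : ℕ} {G : SimpleGraph (Fin n)} [DecidableRel G.Adj]

theorem inner_indicatorVec_toEuclideanLin_adjMatrix (S T : Finset (Fin n)) :
    ⟪indicatorVec S, toEuclideanLin (G.adjMatrix ℝ) (indicatorVec T)⟫_ℝ =
      edgeCountBetween G S T := by
  rw [inner_indicatorVec_left, edgeCountBetween, card_filter, sum_product]
  push_cast
  refine sum_congr rfl fun i _ => ?_
  simp [indicatorVec, toLpLin_apply, mulVec, dotProduct, adjMatrix_apply, ← ite_and]
  congr 1
  ext
  simp

theorem toEuclideanLin_adjMatrix_indicatorVec_univ {d : ℕ} (hreg : G.IsRegularOfDegree d) :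
    toEuclideanLin (G.adjMatrix ℝ) (indicatorVec univ) = (d : ℝ) • indicatorVec univ := by
  ext v
  simpa [indicatorVec, toLpLin_apply] using
    adjMatrix_mulVec_const_apply_of_regular (a := (1 : ℝ)) hreg (v := v)

theorem nonneg_of_abs_adjEigenvalues_le {lam : ℝ} {i₀ : Fin n}
    (hlam : ∀ i, i ≠ i₀ → |adjEigenvalues G i| ≤ lam) (hn : 2 ≤ n) : 0 ≤ lam := by
  have : Nontrivial (Fin n) := Fin.nontrivial_iff_two_le.2 hn
  obtain ⟨i, hi⟩ := exists_ne i₀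
  exact (abs_nonneg _).trans (hlam i hi)

theorem abs_edgeCountBetween_sub_le {d : ℕ} {lam : ℝ} (hreg : G.IsRegularOfDegree d)
    {i₀ : Fin n} (hlam : ∀ i, i ≠ i₀ → |adjEigenvalues G i| ≤ lam) (hlam0 : 0 ≤ lam)
    (hlamd : lam < d) (S T : Finset (Fin n)) :
    |(edgeCountBetween G S T : ℝ) - d * #S * #T / n| ≤ lam * √(#S * #T : ℝ) := by
  have hA := adjMatrix_isHermitian G
  have hsimple (i : Fin n) (hi : i ≠ i₀) : hA.eigenvalues i ≠ d := fun h =>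
    (hlamd.trans_le (le_abs_self _)).not_ge (h ▸ hlam i hi)
  have htop := hA.eigenvalues_mul_inner_mul_inner_mul_norm_sq
    (toEuclideanLin_adjMatrix_indicatorVec_univ hreg) hsimple (indicatorVec S) (indicatorVec T)
  have hmix := hA.abs_inner_toEuclideanLin_sub_le hlam0 hlam (indicatorVec S) (indicatorVec T)
  simp only [norm_indicatorVec, card_univ, Fintype.card_fin, inner_indicatorVec_indicatorVec,
    univ_inter, Real.sq_sqrt (Nat.cast_nonneg _)] at htop
  rwa [inner_indicatorVec_toEuclideanLin_adjMatrix, norm_indicatorVec, norm_indicatorVec,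
    ← Real.sqrt_mul (Nat.cast_nonneg _),
    eq_div_of_mul_eq (by exact_mod_cast i₀.pos.ne') htop] at hmix

theorem two_mul_ncard_edgeSet_induce (B : Finset (Fin n)) :
    2 * (G.induce (B : Set (Fin n))).edgeSet.ncard = edgeCountBetween G B B := by
  classical
  rw [← coe_edgeFinset, Set.ncard_coe_finset, ← sum_degrees_eq_twice_card_edges,
    edgeCountBetween, card_filter, sum_product, ← sum_coe_sort B]
  refine sum_congr rfl fun v _ => ?_
  rw [← sum_coe_sort B, degree, neighborFinset_eq_filter, card_filter]
  rfl

theorem abs_inducedEdgeDensity_sub_mul_le {d : ℕ} {lam : ℝ} (hreg : G.IsRegularOfDegree d)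
    {i₀ : Fin n} (hlam : ∀ i, i ≠ i₀ → |adjEigenvalues G i| ≤ lam) (hlam0 : 0 ≤ lam)
    (hlamd : lam < d) {B : Finset (Fin n)} (hB : 2 ≤ #B) :
    |inducedEdgeDensity G B - d / n| * (#B - 1) ≤ lam + d / n := by
  have hmix := abs_edgeCountBetween_sub_le hreg hlam hlam0 hlamd B B
  rw [← two_mul_ncard_edgeSet_induce, Real.sqrt_mul_self (Nat.cast_nonneg _), Nat.cast_mul,
    Nat.cast_ofNat, mul_div_right_comm, mul_div_right_comm] at hmix
  rw [inducedEdgeDensity, Nat.cast_choose_two]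
  exact abs_div_choose_two_sub_mul_le (by exact_mod_cast hB) (by positivity) hmix

theorem abs_inducedEdgeDensity_sub_le {d : ℕ} {lam ξ : ℝ} (hreg : G.IsRegularOfDegree d)
    {i₀ : Fin n} (hlam : ∀ i, i ≠ i₀ → |adjEigenvalues G i| ≤ lam) (hlam0 : 0 ≤ lam)
    (hlamd : lam < d) (hlamξ : lam ≤ ξ / 320 * d) (hnξ : 320 ≤ ξ * n) (hn : (40 : ℝ) ≤ n)
    {B : Finset (Fin n)} (hB : (n : ℝ) / 20 ≤ #B) :
    |inducedEdgeDensity G B - d / n| ≤ ξ * (d / n) / 4 := by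
  have hn0 : (0 : ℝ) < n := by positivity
  have hξ : 0 < ξ := pos_of_mul_pos_left (by linarith) hn0.le
  have hb : (n : ℝ) / 40 ≤ #B - 1 := by linarith
  have hb2 : 2 ≤ #B := by exact_mod_cast (by linarith : (2 : ℝ) ≤ #B)
  have hdn : (d / n : ℝ) ≤ ξ / 320 * d := by
    rw [div_le_iff₀ hn0]
    nlinarith [(Nat.cast_nonneg d : (0 : ℝ) ≤ d)]
  refine le_of_mul_le_mul_right ?_ (by linarith : (0 : ℝ) < #B - 1)
  refine (abs_inducedEdgeDensity_sub_mul_le hreg hlam hlam0 hlamd hb2).trans ?_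
  calc lam + d / n ≤ ξ / 320 * d + ξ / 320 * d := add_le_add hlamξ hdn
    _ = ξ * (d / n) / 4 * (n / 40) := by field_simp; ring
    _ ≤ ξ * (d / n) / 4 * (#B - 1) := by gcongr

theorem abs_edgeCountBetween_sub_le_of_large {d : ℕ} {lam ξ : ℝ} (hreg : G.IsRegularOfDegree d)
    {i₀ : Fin n} (hlam : ∀ i, i ≠ i₀ → |adjEigenvalues G i| ≤ lam) (hlam0 : 0 ≤ lam)
    (hlamd : lam < d) (hξ : 0 < ξ) (hlamξ : lam ≤ ξ ^ 2 / 4 * d) {S T : Finset (Fin n)}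
    (hS : ξ * n ≤ #S) (hT : ξ * n ≤ #T) :
    |(edgeCountBetween G S T : ℝ) - d / n * #S * #T| ≤ ξ * (d / n) / 4 * #S * #T := by
  have hn0 : (0 : ℝ) < n := by exact_mod_cast i₀.pos
  have hξn : 0 < ξ * n := by positivity
  set r := √(#S * #T : ℝ)
  have hrr : r * r = #S * #T := Real.mul_self_sqrt (by positivity)
  have hξr : ξ * n ≤ r :=
    Real.le_sqrt_of_sq_le (by rw [sq]; exact mul_le_mul hS hT hξn.le (by positivity))
  calc |(edgeCountBetween G S T : ℝ) - d / n * #S * #T|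
      = |(edgeCountBetween G S T : ℝ) - d * #S * #T / n| := by ring_nf
    _ ≤ lam * r := abs_edgeCountBetween_sub_le hreg hlam hlam0 hlamd S T
    _ ≤ ξ * (d / n) / 4 * #S * #T := by
        refine le_of_mul_le_mul_right ?_ hξn
        calc lam * r * (ξ * n) ≤ lam * r * r := by gcongr
          _ = lam * (#S * #T) := by rw [mul_assoc, hrr]
          _ ≤ ξ ^ 2 / 4 * d * (#S * #T) := by gcongr
          _ = ξ * (d / n) / 4 * #S * #T * (ξ * n) := by field_simp

end

theorem abs_sub_mul_mul_le_of_approx {e p q s t ξ : ℝ} (hξ : 0 ≤ ξ) (hξ2 : ξ ≤ 2) (hq : 0 ≤ q)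
    (hs : 0 ≤ s) (ht : 0 ≤ t) (he : |e - q * s * t| ≤ ξ * q / 4 * s * t)
    (hp : |p - q| ≤ ξ * q / 4) : |e - p * s * t| ≤ ξ * s * t * p := by
  have hpq : q / 2 ≤ p := by
    nlinarith [neg_abs_le (p - q)]
  calc |e - p * s * t| = |(e - q * s * t) + (q - p) * (s * t)| := by ring_nf
    _ ≤ |e - q * s * t| + |q - p| * (s * t) := by
        rw [← abs_of_nonneg (mul_nonneg hs ht), ← abs_mul, abs_of_nonneg (mul_nonneg hs ht)]
        exact abs_add_le _ _
    _ ≤ ξ * q / 4 * s * t + ξ * q / 4 * (s * t) := by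
        rw [abs_sub_comm q]
        gcongr
    _ ≤ ξ * s * t * p := by
        nlinarith [mul_nonneg (mul_nonneg hξ hs) ht]

/-- For every `ξ > 0` there are `ε > 0` and `n₀` such that in every `(n, d, λ)`-graph with
`n ≥ n₀` and `λ < ε·d`, for every `B` with `|B| ≥ n/20`, setting `m = |E(G[B])|`, `b = |B|`
and `p = m / (b choose 2)`, every pair of disjoint `S, T ⊆ B` of size at least `ξ·n`
satisfies `|e_G(S, T) − p·|S|·|T|| ≤ ξ·|S|·|T|·p`. -/
theorem mixing_in_induced_subgraph (ξ : ℝ) (hξ : 0 < ξ) :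
    ∃ ε : ℝ, 0 < ε ∧ ∃ n₀ : ℕ, ∀ (n d : ℕ) (lam : ℝ) (G : SimpleGraph (Fin n))
      [DecidableRel G.Adj] (B : Finset (Fin n)), n₀ ≤ n → IsNDLGraph G d lam →
      lam < ε * d → (n : ℝ) / 20 ≤ B.card →
      ∀ S T : Finset (Fin n), S ⊆ B → T ⊆ B → Disjoint S T →
        ξ * n ≤ S.card → ξ * n ≤ T.card →
        |(edgeCountBetween G S T : ℝ) -
            ((G.induce (↑B : Set (Fin n))).edgeSet.ncard : ℝ) / (B.card.choose 2 : ℝ)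
              * S.card * T.card| ≤
          ξ * S.card * T.card *
            (((G.induce (↑B : Set (Fin n))).edgeSet.ncard : ℝ) / (B.card.choose 2 : ℝ)) := by
  -- `ε ≤ ξ / 320` and `n ≥ 320 / ξ` control the density of `G[B]`, `ε ≤ ξ ^ 2 / 4` the error
  -- of the mixing lemma for `S, T`.
  refine ⟨min (ξ / 320) (ξ ^ 2 / 4), by positivity, max 40 ⌈320 / ξ⌉₊, ?_⟩
  intro n d lam G _ B hn ⟨hreg, i₀, hlam⟩ hlamd hB S T _ _ _ hS hT
  have hn40 : (40 : ℝ) ≤ n := by exact_mod_cast (le_max_left _ _).trans hn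
  have hnξ : 320 ≤ ξ * n := by
    have h : 320 / ξ ≤ n := (Nat.le_ceil _).trans (by exact_mod_cast (le_max_right _ _).trans hn)
    rwa [div_le_iff₀ hξ, mul_comm] at h
  have hξ1 : ξ ≤ 1 := by
    have hSn : (#S : ℝ) ≤ n := by exact_mod_cast (card_le_univ S).trans_eq (Fintype.card_fin n)
    nlinarith
  have hd : (0 : ℝ) ≤ d := d.cast_nonneg
  have hlam0 := nonneg_of_abs_adjEigenvalues_le hlam
    (by exact_mod_cast (by linarith : (2 : ℝ) ≤ n))
  have hlam320 : lam ≤ ξ / 320 * d := hlamd.le.trans (by gcongr; exact min_le_left _ _)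
  have hlamξ : lam ≤ ξ ^ 2 / 4 * d := hlamd.le.trans (by gcongr; exact min_le_right _ _)
  have hlamd' : lam < d := hlamd.trans_le (by nlinarith [min_le_left (ξ / 320) (ξ ^ 2 / 4)])
  exact abs_sub_mul_mul_le_of_approx hξ.le (by linarith) (by positivity) (by positivity)
    (by positivity) (abs_edgeCountBetween_sub_le_of_large hreg hlam hlam0 hlamd' hξ hlamξ hS hT)
    (abs_inducedEdgeDensity_sub_le hreg hlam hlam0 hlamd' hlam320 hnξ hn40 hB)
end

section
/- Let G be a finite simple graph, let U be a subset of its vertices and let S ⊆ U. Suppose that for every partition of U \ S into two sets X and Y with |X| ≥ |S|/3 and |Y| ≥ |S|/3, there is at least one edge of G with one endpoint in X and one endpoint in Y. Then the induced subgraph G[U \ S] has at most |S| connected components. -/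
open SimpleGraph

/-!
If `G[U \ S]` had more than `|S|` components, take a set `T` of components covering at least
`|S|/3` vertices, with that number of vertices minimal. Dropping one component from `T` leaves
fewer than `|S|/3` vertices, while the components other than that one cover at least `|S|`
vertices (at least one each); so the components outside `T` cover more than `2|S|/3` vertices,
and splitting `U \ S` along `T` gives a balanced partition with no crossing edge.
-/

section

open Finset

theorem Finset.exists_le_three_mul_sum_and_sum_compl {ι : Type*} [Fintype ι] [DecidableEq ι]
    {w : ι → ℕ} (hw : ∀ i, 1 ≤ w i) {s : ℕ} (hs : s < Fintype.card ι) :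
    ∃ T : Finset ι, s ≤ 3 * ∑ i ∈ T, w i ∧ s ≤ 3 * ∑ i ∈ Tᶜ, w i := by
  have hcard_le : ∀ T : Finset ι, #T ≤ ∑ i ∈ T, w i := fun T => by
    simpa using T.card_nsmul_le_sum w 1 fun i _ => hw i
  have huniv : s ≤ 3 * ∑ i, w i := by
    have := hcard_le univ
    rw [card_univ] at this
    omega
  obtain ⟨T, hT, hTmin⟩ := exists_min_image {T : Finset ι | s ≤ 3 * ∑ i ∈ T, w i}
    (fun T => ∑ i ∈ T, w i) ⟨univ, by simpa using huniv⟩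
  rw [mem_filter_univ] at hT
  refine ⟨T, hT, ?_⟩
  obtain rfl | ⟨t, ht⟩ := T.eq_empty_or_nonempty
  · simp only [sum_empty] at hT
    omega
  have hsplit_T := sum_erase_add T w ht
  have hsplit_univ := sum_erase_add univ w (mem_univ t)
  have hsplit_compl := sum_add_sum_compl T w
  have herase : 3 * ∑ i ∈ T.erase t, w i < s := by
    by_contra! hle
    have := hTmin (T.erase t) (by simpa using hle)
    linarith [hw t]
  have hrest : s ≤ ∑ i ∈ univ.erase t, w i := by
    have := hcard_le (univ.erase t)
    rw [card_erase_of_mem (mem_univ t), card_univ] at this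
    omega
  omega

theorem Finset.exists_le_three_mul_card_preimage_and_compl {α ι : Type*} [Fintype α] [Fintype ι]
    [DecidableEq ι] {f : α → ι} (hf : Function.Surjective f) {s : ℕ}
    (hs : s < Fintype.card ι) :
    ∃ T : Finset ι, s ≤ 3 * #{a | f a ∈ T} ∧ s ≤ 3 * #{a | f a ∉ T} := by
  have hw : ∀ i, 1 ≤ #{a | f a = i} := fun i => by
    obtain ⟨a, rfl⟩ := hf i
    exact card_pos.mpr ⟨a, by simp⟩
  obtain ⟨T, hT, hTc⟩ := exists_le_three_mul_sum_and_sum_compl hw hs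
  refine ⟨T, ?_, ?_⟩
  · rwa [sum_card_fiberwise_eq_card_filter] at hT
  · simpa only [sum_card_fiberwise_eq_card_filter, mem_compl] using hTc

theorem SimpleGraph.card_connectedComponent_le_of_forall_cut {α : Type*} [Fintype α]
    [DecidableEq α] (H : SimpleGraph α) (s : ℕ)
    (h : ∀ A : Finset α, s ≤ 3 * #A → s ≤ 3 * #Aᶜ → ∃ x ∈ A, ∃ y ∈ Aᶜ, H.Adj x y) :
    Nat.card H.ConnectedComponent ≤ s := by
  classical
  by_contra! hlt
  have : Fintype H.ConnectedComponent := Fintype.ofFinite _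
  rw [Nat.card_eq_fintype_card] at hlt
  obtain ⟨T, hT, hTc⟩ := exists_le_three_mul_card_preimage_and_compl
    (f := H.connectedComponentMk) Quot.mk_surjective hlt
  obtain ⟨x, hx, y, hy, hxy⟩ := h {a | H.connectedComponentMk a ∈ T} hT
    (by rwa [compl_filter])
  simp only [compl_filter, mem_filter_univ] at hx hy
  exact hy (ConnectedComponent.sound hxy.reachable ▸ hx)

end

theorem components_le_of_partitions_connected_general (V : Type) [DecidableEq V]
    (G : SimpleGraph V) (U S : Finset V)
    (h : ∀ X Y : Finset V, X ∪ Y = U \ S → Disjoint X Y →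
      (S.card : ℝ) / 3 ≤ X.card → (S.card : ℝ) / 3 ≤ Y.card →
      ∃ x ∈ X, ∃ y ∈ Y, G.Adj x y) :
    Nat.card (G.induce (↑(U \ S) : Set V)).ConnectedComponent ≤ S.card := by
  refine card_connectedComponent_le_of_forall_cut _ _ fun A hA hAc => ?_
  have hreal : ∀ n : ℕ, S.card ≤ 3 * n → (S.card : ℝ) / 3 ≤ n := fun n hn => by
    rw [div_le_iff₀ three_pos]
    exact_mod_cast hn.trans_eq (mul_comm _ _)
  let incl := Function.Embedding.subtype (· ∈ (↑(U \ S) : Set V))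
  obtain ⟨_, hxX, _, hyY, hxy⟩ := h (A.map incl) (Aᶜ.map incl)
    (by rw [← Finset.map_union, Finset.union_compl]; ext v; simp [incl])
    (Finset.disjoint_map incl |>.mpr disjoint_compl_right)
    (by simpa using hreal _ hA) (by simpa using hreal _ hAc)
  obtain ⟨x, hx, rfl⟩ := Finset.mem_map.mp hxX
  obtain ⟨y, hy, rfl⟩ := Finset.mem_map.mp hyY
  exact ⟨x, hx, y, hy, hxy⟩

/-- Let `G` be a finite simple graph, `U` a subset of its vertices and `S ⊆ U`. If for every
partition of `U \ S` into two sets `X`, `Y` with `|X| ≥ |S|/3` and `|Y| ≥ |S|/3` there is an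
edge of `G` between `X` and `Y`, then `G[U \ S]` has at most `|S|` connected components. -/
theorem components_le_of_partitions_connected (V : Type) [Fintype V] [DecidableEq V]
    (G : SimpleGraph V) (U S : Finset V) (hSU : S ⊆ U)
    (h : ∀ X Y : Finset V, X ∪ Y = U \ S → Disjoint X Y →
      (S.card : ℝ) / 3 ≤ X.card → (S.card : ℝ) / 3 ≤ Y.card →
      ∃ x ∈ X, ∃ y ∈ Y, G.Adj x y) :
    Nat.card (G.induce (↑(U \ S) : Set V)).ConnectedComponent ≤ S.card :=
  components_le_of_partitions_connected_general V G U S h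
end
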